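/- Let k be an algebraically closed field, G a finite group, A = ⊕_{g∈G} A_g a finite-dimensional G-graded k-algebra which is separably graded, and B = A#k[G]*. Then every finitely generated A-module Y is a direct summand of B⊗_A Y as A-modules, where the A-module structure on B⊗_A Y is via the embedding i: A ↪ B. -/

import Mathlib

open CategoryTheory CategoryTheory.Abelian TensorProduct

namespace Paper

section Smash

variable (k : Type) [Field k] {G : Type} [AddGroup G] [Fintype G] [DecidableEq G]
variable {A : Type} [Ring A] [Algebra k A]

/-- `B` is (a realization of) the smash product `A # k[G]*` of the `G`-graded
algebra `A = ⊕_g 𝒜_g` : as a `k`-vector space `B = ⊕_g A p_g ≅ (G → A)`, with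
multiplication `(a p_g)(b p_h) = a b_{g - h} p_h` (where `b_{g-h}` is the
degree-`(g - h)` homogeneous component of `b`; the group `G` is written
additively, so `g - h` is `gh⁻¹`), and unit `Σ_h 1·p_h`.  The canonical
embedding `i : A ↪ B`, `a ↦ Σ_h a p_h`, is recorded as the algebra
homomorphism `emb`. -/
structure IsSmashProduct (𝒜 : G → Submodule k A) [GradedAlgebra 𝒜]
    (B : Type) [Ring B] [Algebra k B] where
  equiv : B ≃ₗ[k] (G → A)
  mul_apply : ∀ (x y : B) (h : G),
    equiv (x * y) h = ∑ g : G, equiv x g * (DirectSum.decompose 𝒜 (equiv y h) (g - h) : A)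
  one_apply : ∀ h : G, equiv 1 h = 1
  emb : A →ₐ[k] B
  emb_apply : ∀ (a : A) (h : G), equiv (emb a) h = a

/-- A `G`-graded algebra is separably graded if there is a family `x : G → A` of
central elements of degree `0` (the identity component) with `Σ_g x g = 1` and
`r * x g = x (h + g) * r` for every homogeneous `r` of degree `h`. -/
def SeparablyGraded (𝒜 : G → Submodule k A) : Prop :=
  ∃ x : G → A, (∀ g, x g ∈ Subring.center A) ∧ (∀ g, x g ∈ 𝒜 0) ∧
    (∑ g : G, x g = 1) ∧
    ∀ (h : G) (r : A), r ∈ 𝒜 h → ∀ g : G, r * x g = x (h + g) * r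

end Smash

section Induced

variable {A B : Type} [Ring A] [Ring B]

/-- `N`, together with the structure map `η`, is the induced module `B ⊗_A L`
of the `A`-module `L` along the ring homomorphism `φ : A → B` : `η` is
`A`-equivariant and universal among `A`-equivariant additive maps from `L`
to `B`-modules. -/
def IsInducedModule (φ : A →+* B) (L : Type) [AddCommGroup L] [Module A L]
    (N : Type) [AddCommGroup N] [Module B N] (η : L →+ N) : Prop :=
  (∀ (a : A) (l : L), η (a • l) = φ a • η l) ∧
  ∀ (Z : ModuleCat.{0} B) (u : L →+ Z), (∀ (a : A) (l : L), u (a • l) = φ a • u l) →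
    ∃! v : N →+ Z, (∀ (b : B) (n : N), v (b • n) = b • v n) ∧ v.comp η = u

end Induced

/-! The separability family `x` turns the coordinate description `b = Σ_g b_g p_g` of the smash
product into a trace `ε b = Σ_g b_g x^g`, an `A`-bimodule retraction of `i : A → B`. Then
`y ↦ (b ↦ ε b • y)` is an `A`-equivariant map `Y → Hom_A(B, Y)` into the coinduced `B`-module;
the universal property of `B ⊗_A Y` extends it to a `B`-linear map, and evaluation at `1` is an
`A`-linear retraction of `Y → B ⊗_A Y`. -/

section Graded

variable {ι R k : Type} [Fintype ι] [DecidableEq ι] [Semiring R] [CommSemiring k] [Algebra k R]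

theorem sum_decompose [AddMonoid ι] (𝒜 : ι → Submodule k R) [GradedAlgebra 𝒜] (z : R) :
    ∑ i, (DirectSum.decompose 𝒜 z i : R) = z := by
  conv_rhs => rw [← (DirectSum.decompose 𝒜).symm_apply_apply z,
    ← DirectSum.sum_univ_of (DirectSum.decompose 𝒜 z)]
  simp [DirectSum.decompose_symm_of]

variable [AddGroup ι] (𝒜 : ι → Submodule k R) [GradedAlgebra 𝒜]

theorem sum_decompose_sub_right (z : R) (j : ι) :
    ∑ i, (DirectSum.decompose 𝒜 z (i - j) : R) = z :=
  ((Equiv.subRight j).sum_comp fun i => (DirectSum.decompose 𝒜 z i : R)).trans (sum_decompose 𝒜 z)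

theorem sum_decompose_sub_left (z : R) (j : ι) :
    ∑ i, (DirectSum.decompose 𝒜 z (j - i) : R) = z :=
  ((Equiv.subLeft j).sum_comp fun i => (DirectSum.decompose 𝒜 z i : R)).trans (sum_decompose 𝒜 z)

end Graded

structure IsBimoduleRetraction {A B : Type} [Semiring A] [Semiring B] (φ : A →+* B)
    (ε : B →+ A) : Prop where
  map_one : ε 1 = 1
  map_mul_left : ∀ a b, ε (φ a * b) = a * ε b
  map_mul_right : ∀ b a, ε (b * φ a) = ε b * a

theorem exists_linearEquiv_prod_of_leftInverse {R M L : Type} [Ring R] [AddCommGroup M]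
    [Module R M] [AddCommGroup L] [Module R L] {ι : L →ₗ[R] M} {π : M →ₗ[R] L}
    (h : π ∘ₗ ι = LinearMap.id) :
    ∃ Z : ModuleCat.{0} R, Nonempty (M ≃ₗ[R] L × Z) :=
  ⟨ModuleCat.of R (M ⧸ LinearMap.range ι),
    ⟨(Function.Exact.splitInjectiveEquiv (LinearMap.exact_map_mkQ_range ι)
      (Submodule.mkQ_surjective _) ⟨π, h⟩).1⟩⟩

namespace IsInducedModule

variable {A B : Type} [Ring A] [Ring B] {φ : A →+* B} {L : Type} [AddCommGroup L] [Module A L]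
  {N : ModuleCat.{0} B} {η : L →+ N}

def unitHom (hN : IsInducedModule φ L N η) : L →ₗ[A] (ModuleCat.restrictScalars φ).obj N where
  toFun := η
  map_add' := map_add η
  map_smul' := hN.1

theorem exists_retraction (hN : IsInducedModule φ L N η) {ε : B →+ A}
    (hε : IsBimoduleRetraction φ ε) :
    ∃ π : (ModuleCat.restrictScalars φ).obj N →ₗ[A] L, π ∘ₗ hN.unitHom = LinearMap.id := by
  let εA : (ModuleCat.restrictScalars φ).obj (ModuleCat.of B B) →ₗ[A] A :=
    { toFun := ε
      map_add' := map_add ε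
      map_smul' := fun a b => hε.map_mul_left a b }
  let u : L →+ (ModuleCat.coextendScalars φ).obj (ModuleCat.of A L) :=
    { toFun := fun l => LinearMap.toSpanSingleton A L l ∘ₗ εA
      map_zero' := by ext b; exact smul_zero (ε b)
      map_add' := fun l l' => by ext b; exact smul_add (ε b) l l' }
  have hu_apply : ∀ l (b : B), u l b = ε b • l := fun _ _ => rfl
  have hu : ∀ (a : A) (l : L), u (a • l) = φ a • u l := fun a l =>
    ModuleCat.CoextendScalars.ext <| LinearMap.ext fun (b : B) => by
      change u (a • l) b = u l (b * φ a)
      rw [hu_apply, hu_apply, hε.map_mul_right, mul_smul]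
  obtain ⟨v, ⟨hv_smul, hv_unit⟩, -⟩ := hN.2 _ u hu
  let vB : N ⟶ (ModuleCat.coextendScalars φ).obj (ModuleCat.of A L) :=
    ModuleCat.ofHom { v with map_smul' := hv_smul }
  refine ⟨(ModuleCat.RestrictionCoextensionAdj.HomEquiv.toRestriction φ vB).hom, ?_⟩
  ext l
  change v (η l) (1 : B) = l
  rw [← AddMonoidHom.comp_apply, hv_unit, hu_apply, hε.map_one, one_smul]

theorem exists_linearEquiv_prod (hN : IsInducedModule φ L N η) {ε : B →+ A}
    (hε : IsBimoduleRetraction φ ε) :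
    ∃ Z : ModuleCat.{0} A, Nonempty ((ModuleCat.restrictScalars φ).obj N ≃ₗ[A] L × Z) :=
  let ⟨_, hπ⟩ := hN.exists_retraction hε
  exists_linearEquiv_prod_of_leftInverse hπ

end IsInducedModule

namespace IsSmashProduct

variable {k : Type} [Field k] {G : Type} [AddGroup G] [Fintype G] [DecidableEq G]
  {A : Type} [Ring A] [Algebra k A] {𝒜 : G → Submodule k A} [GradedAlgebra 𝒜]
  {B : Type} [Ring B] [Algebra k B] (hB : IsSmashProduct k 𝒜 B)

theorem equiv_emb_mul (a : A) (b : B) (h : G) : hB.equiv (hB.emb a * b) h = a * hB.equiv b h := by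
  simp only [hB.mul_apply, hB.emb_apply, ← Finset.mul_sum, sum_decompose_sub_right]

theorem equiv_mul_emb (b : B) (a : A) (h : G) :
    hB.equiv (b * hB.emb a) h = ∑ g, hB.equiv b g * (DirectSum.decompose 𝒜 a (g - h) : A) := by
  simp only [hB.mul_apply, hB.emb_apply]

def trace (x : G → A) : B →+ A :=
  AddMonoidHom.mk' (fun b => ∑ g, hB.equiv b g * x g) fun b c => by
    simp only [map_add, Pi.add_apply, add_mul, Finset.sum_add_distrib]

theorem isBimoduleRetraction_trace {x : G → A} (hx_sum : ∑ g, x g = 1)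
    (hx_comm : ∀ (h : G) (r : A), r ∈ 𝒜 h → ∀ g, r * x g = x (h + g) * r) :
    IsBimoduleRetraction hB.emb.toRingHom (hB.trace x) where
  map_one := by simp [trace, hB.one_apply, hx_sum]
  map_mul_left a b := by simp [trace, equiv_emb_mul, Finset.mul_sum, mul_assoc]
  map_mul_right b a := calc
    ∑ h, hB.equiv (b * hB.emb a) h * x h
        = ∑ h, ∑ g, hB.equiv b g * x g * (DirectSum.decompose 𝒜 a (g - h) : A) := by
          refine Finset.sum_congr rfl fun h _ => ?_
          rw [equiv_mul_emb, Finset.sum_mul]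
          refine Finset.sum_congr rfl fun g _ => ?_
          rw [mul_assoc, mul_assoc, hx_comm _ _ (SetLike.coe_mem _), sub_add_cancel]
    _ = ∑ g, hB.equiv b g * x g * a := by
          rw [Finset.sum_comm]
          simp only [← Finset.mul_sum, sum_decompose_sub_left]
    _ = hB.trace x b * a := (Finset.sum_mul ..).symm

end IsSmashProduct

theorem stmt12_general (k : Type) [Field k]
    {G : Type} [AddGroup G] [Fintype G] [DecidableEq G]
    {A : Type} [Ring A] [Algebra k A]
    (𝒜 : G → Submodule k A) [GradedAlgebra 𝒜]
    (B : Type) [Ring B] [Algebra k B] (hB : IsSmashProduct k 𝒜 B)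
    (hsep : SeparablyGraded k 𝒜)
    (Y : ModuleCat.{0} A)
    (N : ModuleCat.{0} B) (η : Y →+ N) (hN : IsInducedModule hB.emb.toRingHom Y N η) :
    ∃ Z : ModuleCat.{0} A, Nonempty
      (((ModuleCat.restrictScalars hB.emb.toRingHom).obj N) ≃ₗ[A] (Y × Z)) := by
  obtain ⟨x, -, -, hx_sum, hx_comm⟩ := hsep
  exact hN.exists_linearEquiv_prod (hB.isBimoduleRetraction_trace hx_sum hx_comm)

/-- Let `A` be a finite dimensional `G`-graded `k`-algebra which
is separably graded and `B = A # k[G]*`.  Every finitely generated `A`-module `Y`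
is a direct summand of `B ⊗_A Y` as `A`-modules (the `A`-structure on `B ⊗_A Y`
being restriction along the embedding `i : A ↪ B`). -/
theorem stmt12 (k : Type) [Field k] [IsAlgClosed k]
    {G : Type} [AddGroup G] [Fintype G] [DecidableEq G]
    {A : Type} [Ring A] [Algebra k A] [FiniteDimensional k A]
    (𝒜 : G → Submodule k A) [GradedAlgebra 𝒜]
    (B : Type) [Ring B] [Algebra k B] (hB : IsSmashProduct k 𝒜 B)
    (hsep : SeparablyGraded k 𝒜)
    (Y : ModuleCat.{0} A) (hY : Module.Finite A Y)
    (N : ModuleCat.{0} B) (η : Y →+ N) (hN : IsInducedModule hB.emb.toRingHom Y N η) :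
    ∃ Z : ModuleCat.{0} A, Nonempty
      (((ModuleCat.restrictScalars hB.emb.toRingHom).obj N) ≃ₗ[A] (Y × Z)) :=
  stmt12_general k 𝒜 B hB hsep Y N η hN

end Paper
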